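/- arXiv:math/0209187 — 2 statements merged into one kernel-verified Lean document; each statement's English description precedes it below -/
import Mathlib

section
/- Let R be a Noetherian ring and S an R-subalgebra of a polynomial ring R[t₁,...,tₙ]. Then contraction gives a bijection between the minimal primes of S and the minimal primes of R; similarly every associated prime of S contracts to an associated prime of R. -/
/-!
A minimal prime `Q` of `R[t₁, …, tₙ]` is the extension of its contraction `q`: `qR[t]` is prime
and contained in `Q`. Since `qR[t]` contracts back to `q`, this makes contraction a bijection
between minimal primes of `R[t]` and of `R`. For `R ⊆ S ⊆ R[t]`, every minimal prime of `S` is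
the contraction of a minimal prime of `R[t]`, which transfers injectivity to `S`; conversely,
by minimality, any minimal prime of `S` inside the contraction of a prime `Q` lying over a minimal
prime `p` of `R` contracts onto `p`.

For associated primes, contraction to `R` keeps `P = √(ann x)` associated (now to the `R`-module
`R[t]`), and in a free module the annihilator of `x` is the intersection of the annihilators of
its finitely many coordinates, so the prime `P` is the radical of one of them.
-/

open Ideal

namespace Ideal

variable {R S T : Type*} [CommSemiring R] [CommSemiring S] [CommSemiring T]

theorem exists_minimalPrimes_comap_eq_of_injective {f : R →+* S} (hf : Function.Injective f)
    {p : Ideal R} (hp : p ∈ minimalPrimes R) : ∃ P ∈ minimalPrimes S, P.comap f = p :=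
  exists_minimalPrimes_comap_eq f p (by rwa [comap_bot_of_injective f hf])

theorem bijOn_comap_minimalPrimes_of_comp {g : S →+* T} (hg : Function.Injective g) (f : R →+* S)
    (h : Set.BijOn (comap (g.comp f)) (minimalPrimes T) (minimalPrimes R)) :
    Set.BijOn (comap f) (minimalPrimes S) (minimalPrimes R) := by
  have lift (P) (hP : P ∈ minimalPrimes S) : ∃ Q ∈ minimalPrimes T, Q.comap g = P :=
    exists_minimalPrimes_comap_eq_of_injective hg hP
  refine ⟨?_, ?_, ?_⟩
  · rintro _ hP
    obtain ⟨Q, hQ, rfl⟩ := lift _ hP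
    exact comap_comap f g ▸ h.mapsTo hQ
  · rintro _ hP₁ _ hP₂ heq
    obtain ⟨Q₁, hQ₁, rfl⟩ := lift _ hP₁
    obtain ⟨Q₂, hQ₂, rfl⟩ := lift _ hP₂
    simp only [comap_comap] at heq
    rw [h.injOn hQ₁ hQ₂ heq]
  · intro p hp
    obtain ⟨Q, hQ, rfl⟩ := h.surjOn hp
    have := hQ.isPrime
    obtain ⟨P, hP, hPQ⟩ := exists_minimalPrimes_le (I := ⊥) (J := Q.comap g) bot_le
    have := hP.isPrime
    have hle : P.comap f ≤ Q.comap (g.comp f) := comap_comap f g ▸ comap_mono hPQ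
    exact ⟨P, hP, le_antisymm hle (hp.2 ⟨inferInstance, bot_le⟩ hle)⟩

end Ideal

namespace MvPolynomial

variable {R : Type*} [CommRing R] {σ : Type*}

theorem isPrime_map_C {q : Ideal R} (hq : q.IsPrime) :
    (q.map (C : R →+* MvPolynomial σ R)).IsPrime := by
  rw [← mk_ker (I := q), ← ker_map]
  exact RingHom.ker_isPrime _

theorem comap_C_map_C (I : Ideal R) : (I.map (C : R →+* MvPolynomial σ R)).comap C = I := by
  ext r
  simp only [mem_comap, mem_map_C_iff]
  refine ⟨fun h ↦ by simpa using h 0, fun h m ↦ ?_⟩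
  classical
  rw [coeff_C]
  split_ifs
  exacts [h, I.zero_mem]

theorem map_C_comap_C_of_mem_minimalPrimes {Q : Ideal (MvPolynomial σ R)}
    (hQ : Q ∈ minimalPrimes (MvPolynomial σ R)) : (Q.comap C).map C = Q :=
  le_antisymm map_comap_le <|
    hQ.2 ⟨isPrime_map_C (hQ.isPrime.comap C), bot_le⟩ map_comap_le

theorem comap_C_mem_minimalPrimes {Q : Ideal (MvPolynomial σ R)}
    (hQ : Q ∈ minimalPrimes (MvPolynomial σ R)) : Q.comap C ∈ minimalPrimes R := by
  refine ⟨⟨hQ.isPrime.comap C, bot_le⟩, fun q ⟨hq, _⟩ hqQ ↦ ?_⟩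
  have hQq : Q ≤ q.map C :=
    hQ.2 ⟨isPrime_map_C hq, bot_le⟩ (map_le_iff_le_comap.mpr hqQ)
  exact comap_C_map_C q ▸ comap_mono hQq

theorem bijOn_comap_C_minimalPrimes :
    Set.BijOn (Ideal.comap (C : R →+* MvPolynomial σ R)) (minimalPrimes _) (minimalPrimes R) := by
  refine ⟨fun Q hQ ↦ comap_C_mem_minimalPrimes hQ, fun Q₁ hQ₁ Q₂ hQ₂ heq ↦ ?_,
    fun p hp ↦ exists_minimalPrimes_comap_eq_of_injective (C_injective σ R) hp⟩
  rw [← map_C_comap_C_of_mem_minimalPrimes hQ₁, ← map_C_comap_C_of_mem_minimalPrimes hQ₂]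
  exact congrArg (Ideal.map C) heq

end MvPolynomial

section AssociatedPrimes

theorem Ideal.IsPrime.exists_eq_radical_of_eq_radical_finsetInf {R ι : Type*} [CommSemiring R]
    {p : Ideal R} (hp : p.IsPrime) {s : Finset ι} {f : ι → Ideal R}
    (h : p = (s.inf f).radical) : ∃ i ∈ s, p = (f i).radical := by
  rw [← radicalInfTopHom_apply, map_finset_inf] at h
  obtain ⟨i, hi, hle⟩ := (hp.inf_le' (f := radicalInfTopHom ∘ f)).mp h.ge
  exact ⟨i, hi, le_antisymm (h.le.trans (Finset.inf_le hi)) hle⟩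

variable {R M : Type*} [CommSemiring R] [AddCommMonoid M] [Module R M]

theorem Finsupp.colon_bot_singleton {ι : Type*} (f : ι →₀ M) :
    (⊥ : Submodule R (ι →₀ M)).colon {f} =
      f.support.inf fun i ↦ (⊥ : Submodule R M).colon {f i} := by
  ext r
  simp only [Submodule.mem_colon_singleton, Submodule.mem_bot, Submodule.mem_finsetInf,
    Finsupp.ext_iff, Finsupp.smul_apply, Finsupp.coe_zero, Pi.zero_apply]
  refine ⟨fun h i _ ↦ h i, fun h i ↦ ?_⟩
  by_cases hi : i ∈ f.support
  · exact h i hi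
  · rw [Finsupp.notMem_support_iff.mp hi, smul_zero]

theorem associatedPrimes_finsupp_subset (ι : Type*) :
    associatedPrimes R (ι →₀ M) ⊆ associatedPrimes R M := by
  rintro p ⟨hp, f, hpf⟩
  rw [Finsupp.colon_bot_singleton] at hpf
  obtain ⟨i, -, hpi⟩ := hp.exists_eq_radical_of_eq_radical_finsetInf hpf
  exact ⟨hp, f i, hpi⟩

theorem associatedPrimes_subset_of_free [Module.Free R M] :
    associatedPrimes R M ⊆ associatedPrimes R R := by
  rw [LinearEquiv.AssociatedPrimes.eq (Module.Free.chooseBasis R M).repr]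
  exact associatedPrimes_finsupp_subset _

theorem IsAssociatedPrime.comap_algebraMap {S : Type*} [CommSemiring S] [Algebra R S] [Module S M]
    [IsScalarTower R S M] {P : Ideal S} (h : IsAssociatedPrime P M) :
    IsAssociatedPrime (P.comap (algebraMap R S)) M := by
  obtain ⟨hP, x, rfl⟩ := h
  refine ⟨hP.comap _, x, ?_⟩
  rw [Ideal.comap_radical]
  congr 1
  ext r
  simp only [mem_comap, Submodule.mem_colon_singleton, Submodule.mem_bot, algebraMap_smul]

end AssociatedPrimes

theorem minimalPrimes_bijOn_of_subalgebra_polynomial_general {R : Type*} [CommRing R]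
    (n : ℕ) (S : Subalgebra R (MvPolynomial (Fin n) R)) :
    Set.BijOn (fun P : Ideal ↥S => P.comap (algebraMap R ↥S))
        (minimalPrimes ↥S) (minimalPrimes R) ∧
      ∀ P ∈ associatedPrimes ↥S ↥S, P.comap (algebraMap R ↥S) ∈ associatedPrimes R R := by
  refine ⟨Ideal.bijOn_comap_minimalPrimes_of_comp (g := algebraMap S _) Subtype.val_injective _ ?_,
    fun P hP ↦ associatedPrimes_subset_of_free (M := MvPolynomial (Fin n) R) ?_⟩
  · rw [← IsScalarTower.algebraMap_eq, MvPolynomial.algebraMap_eq]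
    exact MvPolynomial.bijOn_comap_C_minimalPrimes
  · exact (IsAssociatedPrime.comap_algebraMap hP).map_of_injective S.val.toLinearMap
      Subtype.val_injective

/-- For an `R`-subalgebra `S` of a polynomial ring over a Noetherian ring `R`, contraction is a
bijection between minimal primes of `S` and of `R`, and every associated prime of `S`
contracts to an associated prime of `R`. -/
theorem minimalPrimes_bijOn_of_subalgebra_polynomial {R : Type*} [CommRing R]
    [IsNoetherianRing R] (n : ℕ) (S : Subalgebra R (MvPolynomial (Fin n) R)) :
    Set.BijOn (fun P : Ideal ↥S => P.comap (algebraMap R ↥S))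
        (minimalPrimes ↥S) (minimalPrimes R) ∧
      ∀ P ∈ associatedPrimes ↥S ↥S, P.comap (algebraMap R ↥S) ∈ associatedPrimes R R :=
  minimalPrimes_bijOn_of_subalgebra_polynomial_general n S
end

section
/- Let R be a Noetherian ring, M a finitely generated R-module, and g : M → G a map to a free module inducing an injection on the torsionless quotient of M. Then the kernel of the natural surjection R(M) → R(g) from the Rees algebra of M onto the image of Sym(g) is a nilpotent ideal. -/
noncomputable section

open TensorAlgebra in
/-- The relation defining the symmetric algebra as a quotient of the tensor algebra. -/
inductive SymRel (R : Type*) [CommRing R] (M : Type*) [AddCommGroup M] [Module R M] :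
    TensorAlgebra R M → TensorAlgebra R M → Prop
  | mul_comm (x y : M) : SymRel R M (ι R x * ι R y) (ι R y * ι R x)

/-- The symmetric algebra of a module. -/
abbrev SymmAlg (R : Type*) [CommRing R] (M : Type*) [AddCommGroup M] [Module R M] :=
  RingQuot (SymRel R M)

variable (R : Type*) [CommRing R] {M N : Type*} [AddCommGroup M] [Module R M]
  [AddCommGroup N] [Module R N]

/-- The canonical inclusion of `M` in degree one of its symmetric algebra. -/
def SymmAlg.ι : M →ₗ[R] SymmAlg R M :=
  (RingQuot.mkAlgHom R (SymRel R M)).toLinearMap ∘ₗ TensorAlgebra.ι R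

instance : CommRing (SymmAlg R M) :=
  { (inferInstance : Ring (SymmAlg R M)) with
    mul_comm := by
      have key : ∀ x y : TensorAlgebra R M,
          RingQuot.mkAlgHom R (SymRel R M) x * RingQuot.mkAlgHom R (SymRel R M) y =
          RingQuot.mkAlgHom R (SymRel R M) y * RingQuot.mkAlgHom R (SymRel R M) x := by
        intro x y
        induction x using TensorAlgebra.induction with
        | algebraMap r => simp [Algebra.commutes]
        | ι m =>
          induction y using TensorAlgebra.induction with
          | algebraMap r => simp [Algebra.commutes]
          | ι m' =>
            have h := RingQuot.mkAlgHom_rel R (SymRel.mul_comm (R := R) m m')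
            simpa only [map_mul] using h
          | add a b ha hb => simp only [map_add, add_mul, mul_add, ha, hb]
          | mul a b ha hb =>
            simp only [map_mul, ← mul_assoc, ha]
            rw [mul_assoc _ _ (RingQuot.mkAlgHom R (SymRel R M) b), hb, mul_assoc]
        | add a b ha hb => simp only [map_add, add_mul, mul_add, ha, hb]
        | mul a b ha hb =>
          simp only [map_mul, mul_assoc, hb]
          rw [← mul_assoc, ha, mul_assoc]
      intro a b
      obtain ⟨x, rfl⟩ := RingQuot.mkAlgHom_surjective R (SymRel R M) a
      obtain ⟨y, rfl⟩ := RingQuot.mkAlgHom_surjective R (SymRel R M) b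
      exact key x y }

theorem SymmAlg.ι_mul_comm (x y : M) :
    SymmAlg.ι R x * SymmAlg.ι R y = SymmAlg.ι R y * SymmAlg.ι R x := mul_comm _ _

/-- Functoriality of the symmetric algebra. -/
def SymmAlg.map (f : M →ₗ[R] N) : SymmAlg R M →ₐ[R] SymmAlg R N :=
  RingQuot.liftAlgHom R ⟨TensorAlgebra.lift R ((SymmAlg.ι R).comp f), by
    intro x y h
    cases h with
    | mul_comm a b => simp [mul_comm]⟩

universe w
/-- A map to a free module is versal if every map to a free module factors through it. -/
def IsVersal {R : Type*} [CommRing R] {M F : Type*} [AddCommGroup M] [Module R M]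
    [AddCommGroup F] [Module R F] (f : M →ₗ[R] F) : Prop :=
  ∀ (G : Type w) [AddCommGroup G] [Module R G] [Module.Free R G] (g : M →ₗ[R] G),
    ∃ h : F →ₗ[R] G, h ∘ₗ f = g

namespace SymmAlg

/-- Universal property: lift of a linear map into a commutative algebra. -/
def lift {A : Type*} [CommRing A] [Algebra R A] (φ : M →ₗ[R] A) : SymmAlg R M →ₐ[R] A :=
  RingQuot.liftAlgHom R ⟨TensorAlgebra.lift R φ, by
    intro x y h
    cases h with
    | mul_comm a b => simp [mul_comm]⟩

@[simp] theorem lift_ι_apply {A : Type*} [CommRing A] [Algebra R A] (φ : M →ₗ[R] A) (m : M) :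
    lift R φ (SymmAlg.ι R m) = φ m := by
  simp [lift, SymmAlg.ι, RingQuot.liftAlgHom_mkAlgHom_apply]

@[simp] theorem map_ι (f : M →ₗ[R] N) (m : M) :
    SymmAlg.map R f (SymmAlg.ι R m) = SymmAlg.ι R (f m) := by
  simp [SymmAlg.map, SymmAlg.ι, RingQuot.liftAlgHom_mkAlgHom_apply]

theorem ringHom_congr {S : Type*} [Semiring S] (h₁ h₂ : SymmAlg R M →+* S)
    (halg : ∀ r : R, h₁ (algebraMap R (SymmAlg R M) r) = h₂ (algebraMap R (SymmAlg R M) r))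
    (hι : ∀ m : M, h₁ (SymmAlg.ι R m) = h₂ (SymmAlg.ι R m)) (a : SymmAlg R M) :
    h₁ a = h₂ a := by
  obtain ⟨x, rfl⟩ := RingQuot.mkAlgHom_surjective R (SymRel R M) a
  induction x using TensorAlgebra.induction with
  | algebraMap r => rw [AlgHom.commutes]; exact halg r
  | ι m => exact hι m
  | add a b ha hb => rw [map_add, map_add, map_add, ha, hb]
  | mul a b ha hb => rw [map_mul, map_mul, map_mul, ha, hb]

end SymmAlg

section KeyLemmas

variable {A : Type*} [CommRing A] [IsNoetherianRing A]

theorem aux_exists_ann {p : Ideal A} (hp : p ∈ minimalPrimes A) :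
    ∃ (t : ℕ) (s : A), s ∉ p ∧ ∀ x ∈ p ^ t, s * x = 0 := by
  classical
  haveI hpr : p.IsPrime := hp.1.1
  set L := Localization p.primeCompl with hL
  haveI : IsNoetherianRing L := IsLocalization.isNoetherianRing p.primeCompl L ‹_›
  obtain ⟨n, hn⟩ := IsNoetherianRing.isNilpotent_nilradical L
  have hmap : Ideal.map (algebraMap A L) p ≤ nilradical L := by
    rw [Ideal.map_le_iff_le_comap]
    intro x hx
    rw [Ideal.mem_comap, mem_nilradical, nilpotent_iff_mem_prime]
    intro J hJ
    have hs := IsLocalization.subsingleton_primeSpectrum_of_mem_minimalPrimes p hp L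
    have hJm : J = IsLocalRing.maximalIdeal L :=
      congrArg PrimeSpectrum.asIdeal (hs.elim ⟨J, hJ⟩ ⟨_, (IsLocalRing.maximalIdeal.isMaximal L).isPrime⟩)
    rw [hJm]
    exact (IsLocalization.AtPrime.to_map_mem_maximal_iff L p x).mpr hx
  have hbot : ∀ x ∈ p ^ n, algebraMap A L x = 0 := by
    intro x hx
    have h1 : algebraMap A L x ∈ Ideal.map (algebraMap A L) (p ^ n) :=
      Ideal.mem_map_of_mem _ hx
    rw [Ideal.map_pow] at h1
    have h2 : Ideal.map (algebraMap A L) p ^ n ≤ ⊥ := by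
      rw [← Ideal.zero_eq_bot, ← hn]
      exact Ideal.pow_right_mono hmap n
    simpa using h2 h1
  obtain ⟨S, hS⟩ := IsNoetherian.noetherian (p ^ n)
  have hex : ∀ x : A, ∃ s : A, s ∉ p ∧ (x ∈ (S : Set A) → s * x = 0) := by
    intro x
    by_cases hx : x ∈ (S : Set A)
    · have hx' : x ∈ p ^ n := by rw [← hS]; exact Submodule.subset_span hx
      obtain ⟨m, hm⟩ := (IsLocalization.map_eq_zero_iff p.primeCompl L x).mp (hbot x hx')
      exact ⟨m, m.2, fun _ => hm⟩
    · exact ⟨1, (Ideal.ne_top_iff_one p).mp hpr.ne_top, fun h => absurd h hx⟩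
  choose σ hσ1 hσ2 using hex
  refine ⟨n, ∏ x ∈ S, σ x, ?_, ?_⟩
  · refine Finset.prod_induction σ (· ∉ p) (fun a b ha hb hab => ?_)
      ((Ideal.ne_top_iff_one p).mp hpr.ne_top) (fun x _ => hσ1 x)
    rcases hpr.mem_or_mem hab with h' | h'
    · exact ha h'
    · exact hb h'
  · intro x hx
    rw [← hS] at hx
    induction hx using Submodule.span_induction with
    | mem y hy =>
      obtain ⟨c, hc⟩ := Finset.dvd_prod_of_mem σ (by simpa using hy)
      rw [hc, mul_comm (σ y) c, mul_assoc, hσ2 y hy, mul_zero]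
    | zero => simp
    | add a b _ _ ha hb => rw [mul_add, ha, hb, add_zero]
    | smul r a _ ha => rw [smul_eq_mul, mul_left_comm, ha, mul_zero]

theorem aux_key_mem_prime {M G : Type*} [AddCommGroup M] [Module A M] [AddCommGroup G]
    [Module A G] (g : M →ₗ[A] G)
    (hg : LinearMap.ker g ≤ LinearMap.ker (Module.Dual.eval A M)) {p : Ideal A}
    (hp : p ∈ minimalPrimes A) {m₀ : M} (h : g m₀ ∈ p • (⊤ : Submodule A G))
    (φ : M →ₗ[A] A) : φ m₀ ∈ p := by
  classical
  haveI hpr : p.IsPrime := hp.1.1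
  by_contra hφ
  have hex : ∃ t : ℕ, ∃ s : A, s ∉ p ∧ ∀ x ∈ p ^ t, s * x = 0 := aux_exists_ann hp
  obtain ⟨s, hs, hann⟩ : ∃ s, s ∉ p ∧ ∀ x ∈ p ^ (Nat.find hex), s * x = 0 := Nat.find_spec hex
  have ht0 : Nat.find hex ≠ 0 := by
    intro h0
    have h1 : (1 : A) ∈ p ^ (Nat.find hex) := by rw [h0, pow_zero, Ideal.one_eq_top]; trivial
    have h2 := hann 1 h1
    rw [mul_one] at h2
    exact hs (h2 ▸ p.zero_mem)
  have hlt : Nat.find hex - 1 < Nat.find hex := Nat.sub_lt (Nat.pos_of_ne_zero ht0) one_pos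
  refine Nat.find_min hex hlt ⟨s * φ m₀, fun hm => ?_, fun a ha => ?_⟩
  · rcases hpr.mem_or_mem hm with h' | h'
    · exact hs h'
    · exact hφ h'
  · -- a ∈ p ^ (Nat.find hex - 1), goal : s * φ m₀ * a = 0
    have h1 : a • g m₀ ∈ (p ^ (Nat.find hex)) • (⊤ : Submodule A G) := by
      refine Submodule.smul_induction_on h (fun c hc w _ => ?_) (fun x y hx hy => ?_)
      · rw [smul_smul]
        refine Submodule.smul_mem_smul ?_ trivial
        have hpow : p ^ (Nat.find hex - 1) * p = p ^ (Nat.find hex) := by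
          rw [← pow_succ]
          congr 1
          omega
        exact hpow ▸ Ideal.mul_mem_mul ha hc
      · rw [smul_add]
        exact Submodule.add_mem _ hx hy
    have h2 : s • a • g m₀ = 0 := by
      refine Submodule.smul_induction_on h1 (fun c hc w _ => ?_) (fun x y hx hy => ?_)
      · rw [smul_smul, hann c hc, zero_smul]
      · rw [smul_add, hx, hy, add_zero]
    have h3 : ((s * a) • m₀) ∈ LinearMap.ker g := by
      rw [LinearMap.mem_ker, map_smul, mul_smul]
      exact h2
    have h4 := hg h3
    rw [LinearMap.mem_ker] at h4
    have h5 : Module.Dual.eval A M ((s * a) • m₀) φ = 0 := by rw [h4]; rfl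
    rw [Module.Dual.eval_apply, map_smul, smul_eq_mul] at h5
    calc s * φ m₀ * a = s * a * φ m₀ := by ring
    _ = 0 := h5

end KeyLemmas

set_option maxHeartbeats 2000000 in
/-- If `g : M → G` (with `G` free) induces an injection on the torsionless quotient of `M`
(i.e. `ker g` is contained in the kernel of the evaluation map `M → M**`), then the kernel of
the natural surjection `R(M) → R(g)` is nilpotent: some power of `ker Sym(g)` lies in
`ker Sym(f)` for a versal map `f`. -/
theorem ker_reesAlgebra_surjection_nilpotent {R : Type*} [CommRing R] [IsNoetherianRing R]
    {M : Type*} [AddCommGroup M] [Module R M] [Module.Finite R M]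
    {F : Type*} [AddCommGroup F] [Module R F] [Module.Free R F]
    {G : Type*} [AddCommGroup G] [Module R G] [Module.Free R G]
    (f : M →ₗ[R] F) (hf : IsVersal f) (g : M →ₗ[R] G)
    (hg : LinearMap.ker g ≤ LinearMap.ker (Module.Dual.eval R M)) :
    ∃ m : ℕ, (RingHom.ker (SymmAlg.map R g).toRingHom) ^ m ≤
      RingHom.ker (SymmAlg.map R f).toRingHom := by
  classical
  obtain ⟨n, hn⟩ := IsNoetherianRing.isNilpotent_nilradical R
  refine ⟨n, ?_⟩
  set β := Module.Free.ChooseBasisIndex R F with hβ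
  set bF : Module.Basis β R F := Module.Free.chooseBasis R F with hbF
  set γ := Module.Free.ChooseBasisIndex R G with hγ
  set bG : Module.Basis γ R G := Module.Free.chooseBasis R G with hbG
  set LF : F →ₗ[R] MvPolynomial β R :=
    (Finsupp.linearCombination R fun j : β => (MvPolynomial.X j : MvPolynomial β R)).comp
      bF.repr.toLinearMap with hLF
  set LG : G →ₗ[R] MvPolynomial γ R :=
    (Finsupp.linearCombination R fun i : γ => (MvPolynomial.X i : MvPolynomial γ R)).comp
      bG.repr.toLinearMap with hLG
  set εF : SymmAlg R F →ₐ[R] MvPolynomial β R := SymmAlg.lift R LF with hεF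
  set εG : SymmAlg R G →ₐ[R] MvPolynomial γ R := SymmAlg.lift R LG with hεG
  set SF : SymmAlg R M →ₐ[R] MvPolynomial β R := εF.comp (SymmAlg.map R f) with hSF
  set SG : SymmAlg R M →ₐ[R] MvPolynomial γ R := εG.comp (SymmAlg.map R g) with hSG
  -- injectivity of εF
  set δF : MvPolynomial β R →ₐ[R] SymmAlg R F :=
    MvPolynomial.aeval fun j => SymmAlg.ι R (bF j) with hδF
  have hδε : ∀ x : SymmAlg R F, δF (εF x) = x := by
    intro x
    have key := SymmAlg.ringHom_congr R (δF.toRingHom.comp εF.toRingHom)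
      (RingHom.id _) (fun r => by simp) ?_ x
    · simpa using key
    intro v
    show δF (εF (SymmAlg.ι R v)) = SymmAlg.ι R v
    rw [hεF, SymmAlg.lift_ι_apply]
    have h1 : LF v = (bF.repr v).sum fun j c => c • MvPolynomial.X j := by
      rw [hLF]
      simp [Finsupp.linearCombination_apply]
    rw [h1, map_finsuppSum]
    have h2 : ∀ (j : β) (c : R), δF (c • MvPolynomial.X j) = SymmAlg.ι R (c • bF j) := by
      intro j c
      rw [map_smul, hδF, MvPolynomial.aeval_X, map_smul]
    simp only [h2]
    rw [← map_finsuppSum]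
    congr 1
    conv_rhs => rw [← bF.linearCombination_repr v]
    rw [Finsupp.linearCombination_apply]
  have hεF_inj : Function.Injective εF := Function.LeftInverse.injective hδε
  -- main coefficient claim
  have hcoeff : ∀ z, SymmAlg.map R g z = 0 → ∀ d : β →₀ ℕ,
      MvPolynomial.coeff d (SF z) ∈ nilradical R := by
    intro z hz d
    rw [nilradical_eq_sInf, Submodule.mem_sInf]
    intro q hq
    haveI : Ideal.IsPrime q := hq
    obtain ⟨p, hp, hpq⟩ := Ideal.exists_minimalPrimes_le (bot_le : (⊥ : Ideal R) ≤ q)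
    have hpmin : p ∈ minimalPrimes R := hp
    refine hpq ?_
    haveI hppr : p.IsPrime := hpmin.1.1
    set Q := R ⧸ p with hQ
    set κ := FractionRing Q with hκ
    set ρ : R →+* κ := (algebraMap Q κ).comp (Ideal.Quotient.mk p) with hρ
    have hker : ∀ x : R, ρ x = 0 ↔ x ∈ p := by
      intro x
      constructor
      · intro hx
        rw [hρ, RingHom.comp_apply] at hx
        have h1 : Ideal.Quotient.mk p x = 0 :=
          IsFractionRing.injective Q κ (by rw [hx, map_zero])
        exact Ideal.Quotient.eq_zero_iff_mem.mp h1
      · intro hx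
        rw [hρ, RingHom.comp_apply, Ideal.Quotient.eq_zero_iff_mem.mpr hx, map_zero]
    set cg : M → (γ →₀ κ) := fun m => (bG.repr (g m)).mapRange ρ (map_zero ρ) with hcg
    set cf : M → (β →₀ κ) := fun m => (bF.repr (f m)).mapRange ρ (map_zero ρ) with hcf
    have hcg_add : ∀ x y, cg (x + y) = cg x + cg y := by
      intro x y
      rw [hcg]
      simp only [map_add]
      ext i
      simp [Finsupp.mapRange_apply]
    have hcf_add : ∀ x y, cf (x + y) = cf x + cf y := by
      intro x y
      rw [hcf]
      simp only [map_add]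
      ext i
      simp [Finsupp.mapRange_apply]
    have hcg_smul : ∀ (r : R) x, cg (r • x) = ρ r • cg x := by
      intro r x
      ext i
      simp [hcg, Finsupp.mapRange_apply]
    have hcf_smul : ∀ (r : R) x, cf (r • x) = ρ r • cf x := by
      intro r x
      ext i
      simp [hcf, Finsupp.mapRange_apply]
    have hcg_sum : ∀ (s : Finset M) (a : M → R),
        cg (∑ i ∈ s, a i • i) = ∑ i ∈ s, ρ (a i) • cg i := by
      intro s a
      induction s using Finset.induction with
      | empty => ext i; simp [hcg, Finsupp.mapRange_apply]
      | insert _ _ hx ih =>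
        rw [Finset.sum_insert hx, Finset.sum_insert hx, hcg_add, hcg_smul, ih]
    have hcf_sum : ∀ (s : Finset M) (a : M → R),
        cf (∑ i ∈ s, a i • i) = ∑ i ∈ s, ρ (a i) • cf i := by
      intro s a
      induction s using Finset.induction with
      | empty => ext i; simp [hcf, Finsupp.mapRange_apply]
      | insert _ _ hx ih =>
        rw [Finset.sum_insert hx, Finset.sum_insert hx, hcf_add, hcf_smul, ih]
    set θg : (M →₀ κ) →ₗ[κ] (γ →₀ κ) := Finsupp.linearCombination κ cg with hθg
    set θf : (M →₀ κ) →ₗ[κ] (β →₀ κ) := Finsupp.linearCombination κ cf with hθf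
    have hKEY : LinearMap.ker θg ≤ LinearMap.ker θf := by
      intro v hv
      rw [LinearMap.mem_ker] at hv ⊢
      obtain ⟨dd, hdd⟩ := IsLocalization.exist_integer_multiples
        (nonZeroDivisors Q) (S := κ) v.support (fun m => v m)
      have hch : ∀ i : M, ∃ aa : R, i ∈ v.support →
          algebraMap Q κ (Ideal.Quotient.mk p aa) = (dd : Q) • v i := by
        intro i
        by_cases hi : i ∈ v.support
        · obtain ⟨q0, hq0⟩ := hdd i hi
          obtain ⟨aa, rfl⟩ := Ideal.Quotient.mk_surjective q0
          exact ⟨aa, fun _ => hq0⟩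
        · exact ⟨0, fun h' => absurd h' hi⟩
      choose aa haa using hch
      have hρaa : ∀ i ∈ v.support, ρ (aa i) = algebraMap Q κ dd * v i := by
        intro i hi
        rw [hρ, RingHom.comp_apply, haa i hi, Algebra.smul_def]
      have hgm₀ : cg (∑ i ∈ v.support, aa i • i) = algebraMap Q κ dd • θg v := by
        rw [hcg_sum, hθg, Finsupp.linearCombination_apply, Finsupp.sum, Finset.smul_sum]
        refine Finset.sum_congr rfl fun i hi => ?_
        rw [hρaa i hi, mul_smul]
      have hfm₀ : cf (∑ i ∈ v.support, aa i • i) = algebraMap Q κ dd • θf v := by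
        rw [hcf_sum, hθf, Finsupp.linearCombination_apply, Finsupp.sum, Finset.smul_sum]
        refine Finset.sum_congr rfl fun i hi => ?_
        rw [hρaa i hi, mul_smul]
      have hg0 : cg (∑ i ∈ v.support, aa i • i) = 0 := by rw [hgm₀, hv, smul_zero]
      have hco : ∀ i : γ, bG.repr (g (∑ i ∈ v.support, aa i • i)) i ∈ p := by
        intro i
        refine (hker _).mp ?_
        have h6 := DFunLike.congr_fun hg0 i
        rw [hcg] at h6
        simpa [Finsupp.mapRange_apply] using h6
      have hmem : g (∑ i ∈ v.support, aa i • i) ∈ p • (⊤ : Submodule R G) := by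
        set w := g (∑ i ∈ v.support, aa i • i) with hw
        have hrepr : w = (bG.repr w).sum fun i c => c • bG i := by
          conv_lhs => rw [← bG.linearCombination_repr w]
          rw [Finsupp.linearCombination_apply]
        rw [hrepr]
        refine Submodule.sum_mem _ fun i _ => ?_
        exact Submodule.smul_mem_smul (hco i) trivial
      have hcf0 : cf (∑ i ∈ v.support, aa i • i) = 0 := by
        ext j
        have hφ : bF.repr (f (∑ i ∈ v.support, aa i • i)) j ∈ p := by
          have h7 := aux_key_mem_prime g hg hpmin hmem ((bF.coord j).comp f)
          simpa [Module.Basis.coord_apply] using h7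
        have h12 : (cf (∑ i ∈ v.support, aa i • i)) j =
            ρ ((bF.repr (f (∑ i ∈ v.support, aa i • i))) j) := by
          rw [hcf, Finsupp.mapRange_apply]
        rw [h12, (hker _).mpr hφ]
        simp
      have hdd0 : algebraMap Q κ dd ≠ 0 := by
        intro h8
        have h9 : (dd : Q) = 0 := IsFractionRing.injective Q κ (by rw [h8, map_zero])
        exact nonZeroDivisors.ne_zero dd.2 h9
      have h10 : algebraMap Q κ dd • θf v = 0 := by rw [← hfm₀, hcf0]
      rcases smul_eq_zero.mp h10 with h11 | h11
      · exact absurd h11 hdd0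
      · exact h11
    obtain ⟨rr, hrr⟩ := ((LinearMap.ker θg).liftQ θg le_rfl).exists_leftInverse_of_injective
      (Submodule.ker_liftQ_eq_bot _ _ _ le_rfl)
    set u : (γ →₀ κ) →ₗ[κ] (β →₀ κ) := ((LinearMap.ker θg).liftQ θf hKEY).comp rr with hu
    have huθ : ∀ x : M →₀ κ, u (θg x) = θf x := by
      intro x
      have h3 : θg x = (LinearMap.ker θg).liftQ θg le_rfl ((LinearMap.ker θg).mkQ x) := by
        rw [Submodule.mkQ_apply, Submodule.liftQ_apply]
      rw [hu, LinearMap.comp_apply, h3]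
      have h4 : rr (((LinearMap.ker θg).liftQ θg le_rfl) ((LinearMap.ker θg).mkQ x)) =
          (LinearMap.ker θg).mkQ x := by
        rw [← LinearMap.comp_apply, hrr, LinearMap.id_apply]
      rw [h4, Submodule.mkQ_apply, Submodule.liftQ_apply]
    have hucg : ∀ m : M, u (cg m) = cf m := by
      intro m
      have h1 : θg (Finsupp.single m 1) = cg m := by
        rw [hθg, Finsupp.linearCombination_single, one_smul]
      have h2 : θf (Finsupp.single m 1) = cf m := by
        rw [hθf, Finsupp.linearCombination_single, one_smul]
      rw [← h1, ← h2, huθ]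
    set LPκ : (β →₀ κ) →ₗ[κ] MvPolynomial β κ :=
      Finsupp.linearCombination κ (fun j : β => (MvPolynomial.X j : MvPolynomial β κ)) with hLPκ
    set Φ : MvPolynomial γ R →+* MvPolynomial β κ :=
      MvPolynomial.eval₂Hom (MvPolynomial.C.comp ρ)
        (fun i => LPκ (u (Finsupp.single i 1))) with hΦ
    have hΦlin : ∀ w : γ →₀ R,
        Φ (Finsupp.linearCombination R (fun i : γ => (MvPolynomial.X i : MvPolynomial γ R)) w)
          = LPκ (u (w.mapRange ρ (map_zero ρ))) := by
      intro w
      induction w using Finsupp.induction with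
      | zero => simp
      | single_add i c w hi hc ih =>
        rw [map_add, map_add]
        have hmr : (Finsupp.single i c + w).mapRange ρ (map_zero ρ) =
            (Finsupp.single i c).mapRange ρ (map_zero ρ) + w.mapRange ρ (map_zero ρ) := by
          ext j'
          simp [Finsupp.mapRange_apply, Finsupp.add_apply, map_add, Finsupp.single_apply,
            apply_ite ρ]
        rw [hmr, map_add, map_add, ih]
        congr 1
        rw [Finsupp.linearCombination_single, Finsupp.mapRange_single]
        rw [MvPolynomial.smul_eq_C_mul, map_mul]
        have hC : Φ (MvPolynomial.C c) = MvPolynomial.C (ρ c) := by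
          rw [hΦ]
          simp
        have hX : Φ (MvPolynomial.X i) = LPκ (u (Finsupp.single i 1)) := by
          rw [hΦ]
          simp
        rw [hC, hX]
        have hsingle : Finsupp.single i (ρ c) = ρ c • Finsupp.single i (1 : κ) := by
          rw [Finsupp.smul_single, smul_eq_mul, mul_one]
        rw [hsingle, map_smul, map_smul, MvPolynomial.smul_eq_C_mul]
    have hmaplin : ∀ w : β →₀ R,
        MvPolynomial.map ρ
            (Finsupp.linearCombination R (fun j : β => (MvPolynomial.X j : MvPolynomial β R)) w)
          = LPκ (w.mapRange ρ (map_zero ρ)) := by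
      intro w
      induction w using Finsupp.induction with
      | zero => simp
      | single_add j c w hj hc ih =>
        rw [map_add]
        have hmr : (Finsupp.single j c + w).mapRange ρ (map_zero ρ) =
            (Finsupp.single j c).mapRange ρ (map_zero ρ) + w.mapRange ρ (map_zero ρ) := by
          ext j''
          simp [Finsupp.mapRange_apply, Finsupp.add_apply, map_add, Finsupp.single_apply,
            apply_ite ρ]
        rw [hmr, map_add, map_add, ih]
        congr 1
        rw [Finsupp.linearCombination_single, Finsupp.mapRange_single]
        rw [MvPolynomial.smul_eq_C_mul, map_mul, MvPolynomial.map_C, MvPolynomial.map_X]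
        rw [hLPκ, Finsupp.linearCombination_single, MvPolynomial.smul_eq_C_mul]
    have hcentral : Φ (SG z) = MvPolynomial.map ρ (SF z) := by
      refine SymmAlg.ringHom_congr R (Φ.comp SG.toRingHom)
        ((MvPolynomial.map ρ).comp SF.toRingHom) ?_ ?_ z
      · intro r
        show Φ (SG (algebraMap _ _ r)) = MvPolynomial.map ρ (SF (algebraMap _ _ r))
        rw [AlgHom.commutes, AlgHom.commutes, MvPolynomial.algebraMap_eq,
          MvPolynomial.algebraMap_eq, MvPolynomial.map_C, hΦ]
        simp
      · intro m
        show Φ (SG (SymmAlg.ι R m)) = MvPolynomial.map ρ (SF (SymmAlg.ι R m))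
        have h1 : SG (SymmAlg.ι R m) =
            Finsupp.linearCombination R (fun i : γ => (MvPolynomial.X i : MvPolynomial γ R))
              (bG.repr (g m)) := by
          rw [hSG, AlgHom.comp_apply, SymmAlg.map_ι, hεG, SymmAlg.lift_ι_apply, hLG]
          rfl
        have h2 : SF (SymmAlg.ι R m) =
            Finsupp.linearCombination R (fun j : β => (MvPolynomial.X j : MvPolynomial β R))
              (bF.repr (f m)) := by
          rw [hSF, AlgHom.comp_apply, SymmAlg.map_ι, hεF, SymmAlg.lift_ι_apply, hLF]
          rfl
        rw [h1, h2, hΦlin, hmaplin]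
        have h3 : (bG.repr (g m)).mapRange ρ (map_zero ρ) = cg m := by rw [hcg]
        have h4 : (bF.repr (f m)).mapRange ρ (map_zero ρ) = cf m := by rw [hcf]
        rw [h3, h4, hucg]
    have hz0 : SG z = 0 := by
      rw [hSG, AlgHom.comp_apply, hz, map_zero]
    have h5 : MvPolynomial.map ρ (SF z) = 0 := by rw [← hcentral, hz0, map_zero]
    have hc := congrArg (MvPolynomial.coeff d) h5
    rw [MvPolynomial.coeff_map] at hc
    exact (hker _).mp (by simpa using hc)
  -- assemble
  have hK : RingHom.ker (SymmAlg.map R g).toRingHom ≤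
      Ideal.comap SF.toRingHom
        (Ideal.map (MvPolynomial.C : R →+* MvPolynomial β R) (nilradical R)) := by
    intro z hz
    rw [Ideal.mem_comap]
    exact MvPolynomial.mem_map_C_iff.mpr fun d => hcoeff z hz d
  have h1 : (RingHom.ker (SymmAlg.map R g).toRingHom) ^ n ≤
      Ideal.comap SF.toRingHom
        ((Ideal.map (MvPolynomial.C : R →+* MvPolynomial β R) (nilradical R)) ^ n) :=
    le_trans (Ideal.pow_right_mono hK n) (Ideal.le_comap_pow _ n)
  have h2 : (Ideal.map (MvPolynomial.C : R →+* MvPolynomial β R) (nilradical R)) ^ n = ⊥ := by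
    rw [← Ideal.map_pow, hn, Ideal.zero_eq_bot, Ideal.map_bot]
  refine le_trans h1 ?_
  rw [h2]
  intro x hx
  rw [Ideal.mem_comap, Ideal.mem_bot] at hx
  rw [RingHom.mem_ker]
  have hx' : εF (SymmAlg.map R f x) = εF 0 := by rw [map_zero]; exact hx
  exact hεF_inj hx'
end
end
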